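/- arXiv:1604.03122 — 3 statements merged into one kernel-verified Lean document; each statement's English description precedes it below -/
import Mathlib

section
/- For real u with 0 < u < 2π, the trilogarithm inversion formula holds: Li₃(e^{iu}) − Li₃(e^{-iu}) = (i/6)u³ − (iπ/2)u² + (iπ²/3)u. -/
open Real Complex

lemma sin_series (u : ℝ) (h0 : 0 ≤ u) (h2 : u ≤ 2 * π) :
    HasSum (fun n : ℕ => Real.sin (n * u) / (n:ℝ) ^ 3)
      (u^3/12 - π*u^2/4 + π^2*u/6) := by
  have hπ := Real.pi_pos
  have hx : u / (2*π) ∈ Set.Icc (0:ℝ) 1 :=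
    ⟨div_nonneg h0 (by positivity), by rw [div_le_one (by positivity)]; exact h2⟩
  have h := hasSum_one_div_nat_pow_mul_sin one_ne_zero hx
  have heval : (Polynomial.map (algebraMap ℚ ℝ) (Polynomial.bernoulli (2*1+1))).eval (u/(2*π))
      = (u/(2*π))^3 - 3/2*(u/(2*π))^2 + 1/2*(u/(2*π)) := by
    norm_num
    simp [Polynomial.bernoulli, Finset.sum_range_succ, bernoulli]
    ring
  rw [heval] at h
  convert h using 1
  · funext n
    have : 2*π*(n:ℝ)*(u/(2*π)) = n*u := by field_simp
    rw [this]; ring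
  · have hfac : ((2*1+1).factorial : ℝ) = 6 := by norm_num [Nat.factorial]
    rw [hfac]; field_simp; ring

noncomputable def Li3 (z : ℂ) : ℂ := ∑' k : ℕ+, z ^ (k : ℕ) / (k : ℂ) ^ 3

theorem trilog_inversion (u : ℝ) (h0 : 0 < u) (h2 : u < 2 * π) :
    Li3 (Complex.exp (u * Complex.I)) - Li3 (Complex.exp (-u * Complex.I)) =
      (Complex.I / 6) * (u : ℂ) ^ 3 - (Complex.I * π / 2) * (u : ℂ) ^ 2
        + (Complex.I * (π : ℂ) ^ 2 / 3) * (u : ℂ) := by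
  have habs : ∀ (v : ℝ) (k : ℕ+),
      ‖Complex.exp (v * Complex.I) ^ (k:ℕ) / (k:ℂ)^3‖ = 1/(k:ℝ)^3 := by
    intro v k
    rw [norm_div, norm_pow, Complex.norm_exp]
    simp
  have hsum3 : Summable (fun k : ℕ+ => (1:ℝ) / (k:ℝ)^3) := by
    have : Summable (fun n : ℕ => (1:ℝ) / (n:ℝ)^3) :=
      Real.summable_one_div_nat_pow.mpr (by norm_num)
    have := this.comp_injective (PNat.coe_injective)
    simpa [Function.comp_def] using this
  have hs : ∀ v : ℝ, Summable (fun k : ℕ+ => Complex.exp (v * Complex.I) ^ (k:ℕ) / (k:ℂ)^3) := by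
    intro v
    refine Summable.of_norm ?_
    simpa only [habs v] using hsum3
  set f : ℕ → ℂ := fun n =>
    Complex.exp (u * Complex.I) ^ n / (n:ℂ)^3 - Complex.exp (-u * Complex.I) ^ n / (n:ℂ)^3 with hf_def
  have hfn : ∀ n : ℕ, f n = 2 * Complex.I * ((Real.sin (n * u) / (n:ℝ)^3 : ℝ) : ℂ) := by
    intro n
    simp only [hf_def]
    rw [← Complex.exp_nat_mul, ← Complex.exp_nat_mul]
    have h1 : (n:ℂ) * ((u:ℂ) * Complex.I) = ((n*u : ℝ):ℂ) * Complex.I := by push_cast; ring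
    have h2 : (n:ℂ) * (-(u:ℂ) * Complex.I) = (-(n*u : ℝ):ℂ) * Complex.I := by push_cast; ring
    rw [h1, h2, Complex.exp_mul_I, Complex.exp_mul_I]
    rw [Complex.cos_neg, Complex.sin_neg]
    rw [div_sub_div_same]
    rw [Complex.ofReal_div]
    push_cast
    ring
  have hS := (sin_series u h0.le h2.le)
  have hfC : HasSum f (2 * Complex.I * ((u^3/12 - π*u^2/4 + π^2*u/6 : ℝ) : ℂ)) := by
    have := (Complex.hasSum_ofReal.mpr hS).mul_left (2 * Complex.I)
    exact this.congr_fun fun n => hfn n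
  have hf0 : ∀ n : ℕ, n ∉ Set.range (fun k : ℕ+ => (k:ℕ)) → f n = 0 := by
    intro n hn
    have : n = 0 := by
      by_contra h
      exact hn ⟨⟨n, Nat.pos_of_ne_zero h⟩, rfl⟩
    simp [hf_def, this]
  have hfP : HasSum (fun k : ℕ+ => f k) (2 * Complex.I * ((u^3/12 - π*u^2/4 + π^2*u/6 : ℝ) : ℂ)) :=
    (Function.Injective.hasSum_iff (PNat.coe_injective) hf0).mpr hfC
  rw [Li3, Li3, ← Summable.tsum_sub (hs u) (by simpa using hs (-u))]
  rw [hfP.tsum_eq]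
  push_cast
  ring
end

section
/- For real u with 0 < u < 2π, i·g₊(u) = Li₃(e^{iu}) − Li₃(e^{-iu}), where g₊(u) = u³/6 − (π/2)u² + (π²/3)u. -/
open Real Complex

noncomputable def gPlus (u : ℝ) : ℝ := u ^ 3 / 6 - (π / 2) * u ^ 2 + (π ^ 2 / 3) * u

theorem gplus_eq_trilog (u : ℝ) (h0 : 0 < u) (h2 : u < 2 * π) :
    Complex.I * (gPlus u : ℂ) =
      Li3 (Complex.exp (u * Complex.I)) - Li3 (Complex.exp (-u * Complex.I)) := by
  have hπ : (0:ℝ) < π := Real.pi_pos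
  set x : ℝ := u / (2 * π) with hxdef
  have hx : x ∈ Set.Icc (0:ℝ) 1 := by
    constructor
    · positivity
    · rw [div_le_one (by positivity)]; exact h2.le
  -- the Fourier series of B₃
  have hB : (Polynomial.aeval x) (Polynomial.bernoulli 3)
      = x ^ 3 - 3 / 2 * x ^ 2 + 1 / 2 * x := by
    rw [Polynomial.aeval_def, ← Polynomial.eval_map]
    simp_rw [Polynomial.bernoulli, Finset.sum_range_succ, Polynomial.map_add,
      Polynomial.eval_add, Polynomial.map_monomial, Polynomial.eval_monomial]
    rw [Finset.sum_range_zero, Polynomial.map_zero, Polynomial.eval_zero, zero_add,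
      bernoulli_one, bernoulli_eq_bernoulli'_of_ne_one zero_ne_one, bernoulli'_zero,
      bernoulli_eq_bernoulli'_of_ne_one (by decide : 2 ≠ 1), bernoulli'_two,
      bernoulli_eq_bernoulli'_of_ne_one (by decide : 3 ≠ 1), bernoulli'_three]
    norm_num
    ring
  have hsum0 := hasSum_one_div_nat_pow_mul_sin (k := 1) one_ne_zero hx
  norm_num [Nat.factorial] at hsum0
  have hS : HasSum (fun n : ℕ => 1 / (n : ℝ) ^ 3 * Real.sin (n * u)) (gPlus u / 2) := by
    convert hsum0 using 1
    · funext n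
      rw [one_div]
      congr 1
      congr 1
      rw [hxdef]
      field_simp
    · rw [hB, hxdef, gPlus]
      field_simp
      ring
  -- restrict to ℕ+
  have hS' : HasSum (fun n : ℕ+ => 1 / ((n:ℕ) : ℝ) ^ 3 * Real.sin ((n:ℕ) * u)) (gPlus u / 2) := by
    apply (Function.Injective.hasSum_iff (f := fun n : ℕ => 1 / (n : ℝ) ^ 3 * Real.sin (n * u))
      (fun a b h => PNat.coe_injective h) ?_).mpr hS
    intro n hn
    have : n = 0 := by
      by_contra h
      exact hn ⟨⟨n, Nat.pos_of_ne_zero h⟩, rfl⟩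
    simp [this]
  -- complexify and multiply by 2I
  have hC : HasSum (fun n : ℕ+ => (2 * Complex.I) *
      ((1 / ((n:ℕ) : ℝ) ^ 3 * Real.sin ((n:ℕ) * u) : ℝ) : ℂ)) (Complex.I * (gPlus u : ℂ)) := by
    have := (Complex.hasSum_ofReal.mpr hS').mul_left (2 * Complex.I)
    convert this using 1
    · rfl
    push_cast
    ring
  -- termwise identification
  have hterm : ∀ n : ℕ+, (2 * Complex.I) *
      ((1 / ((n:ℕ) : ℝ) ^ 3 * Real.sin ((n:ℕ) * u) : ℝ) : ℂ)
      = Complex.exp (u * Complex.I) ^ (n:ℕ) / ((n:ℕ) : ℂ) ^ 3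
        - Complex.exp (-u * Complex.I) ^ (n:ℕ) / ((n:ℕ) : ℂ) ^ 3 := by
    intro n
    have h1 : Complex.exp (u * Complex.I) ^ (n:ℕ) = Complex.exp (((n:ℕ) * u : ℝ) * Complex.I) := by
      rw [← Complex.exp_nat_mul]; push_cast; ring_nf
    have h2 : Complex.exp (-u * Complex.I) ^ (n:ℕ)
        = Complex.exp (-(((n:ℕ) * u : ℝ) * Complex.I)) := by
      rw [← Complex.exp_nat_mul]; push_cast; ring_nf
    rw [h1, h2, div_sub_div_same]
    have hsin : Complex.exp (((n:ℕ) * u : ℝ) * Complex.I)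
        - Complex.exp (-(((n:ℕ) * u : ℝ) * Complex.I))
        = 2 * Complex.I * Complex.sin (((n:ℕ) * u : ℝ)) := by
      rw [show -(((n:ℕ) * u : ℝ) * Complex.I) = ((-((n:ℕ) * u : ℝ) : ℝ) : ℂ) * Complex.I by
          push_cast; ring, Complex.exp_mul_I, Complex.exp_mul_I, Complex.ofReal_neg,
        Complex.cos_neg, Complex.sin_neg]
      ring
    rw [hsin, ← Complex.ofReal_sin]
    push_cast
    have hn : ((n:ℕ) : ℂ) ≠ 0 := by exact_mod_cast n.ne_zero
    field_simp
  have hC' : HasSum (fun n : ℕ+ => Complex.exp (u * Complex.I) ^ (n:ℕ) / ((n:ℕ) : ℂ) ^ 3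
      - Complex.exp (-u * Complex.I) ^ (n:ℕ) / ((n:ℕ) : ℂ) ^ 3) (Complex.I * (gPlus u : ℂ)) := by
    have hC'0 := hC
    refine hC'0.congr_fun (fun n => (hterm n).symm)
    
  -- summability of each Li3 series
  have hbound : Summable (fun n : ℕ+ => 1 / ((n:ℕ) : ℝ) ^ 3) := by
    have h := (Real.summable_one_div_nat_pow.mpr (by norm_num : 1 < 3))
    exact h.comp_injective (fun a b h => PNat.coe_injective h)
  have hsummable : ∀ v : ℝ, Summable
      (fun n : ℕ+ => Complex.exp (v * Complex.I) ^ (n:ℕ) / ((n:ℕ) : ℂ) ^ 3) := by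
    intro v
    apply Summable.of_norm
    refine hbound.congr fun n => ?_
    rw [norm_div, norm_pow, norm_pow, Complex.norm_exp_ofReal_mul_I]
    simp [Complex.norm_natCast]
  have hneg : Complex.exp (-(u:ℂ) * Complex.I) = Complex.exp ((-u : ℝ) * Complex.I) := by
    push_cast; ring_nf
  rw [Li3, Li3, hneg, ← Summable.tsum_sub (hsummable u) (hsummable (-u)), ← hC'.tsum_eq]
  simp_rw [hneg]
end

section
/- Let 0 < Δ₁ ≤ Δ₂, 0 < Δ₃ ≤ Δ₄ with Δ₁+Δ₂+Δ₃+Δ₄ = 2π, and set μ = √(2Δ₁Δ₂Δ₃Δ₄). Define ρ on the three intervals: ρ(t) = (μ + tΔ₃)/((Δ₁+Δ₃)(Δ₂+Δ₃)(Δ₄−Δ₃)) for −μ/Δ₃ < t < −μ/Δ₄ (requiring Δ₃ < Δ₄), ρ(t) = (2πμ + t(Δ₃Δ₄ − Δ₁Δ₂))/((Δ₁+Δ₃)(Δ₂+Δ₃)(Δ₁+Δ₄)(Δ₂+Δ₄)) for −μ/Δ₄ < t < μ/Δ₂, and ρ(t) = (μ − tΔ₁)/((Δ₁+Δ₃)(Δ₁+Δ₄)(Δ₂−Δ₁))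 for μ/Δ₂ < t < μ/Δ₁ (requiring Δ₁ < Δ₂). Then ρ ≥ 0 on its support and ∫_{−μ/Δ₃}^{μ/Δ₁} ρ(t) dt = 1. -/
open Real

open MeasureTheory intervalIntegral in
private lemma abjm_piece (a b c d e : ℝ) (hab : a < b) (f : ℝ → ℝ)
    (h : ∀ t ∈ Set.Ioo a b, f t = (c + t * d) / e) :
    IntervalIntegrable f volume a b ∧
      ∫ t in a..b, f t = ((b - a) * c + (b ^ 2 - a ^ 2) / 2 * d) / e := by
  have hg : Continuous fun t : ℝ => (c + t * d) / e := by fun_prop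
  have heq : Set.EqOn f (fun t => (c + t * d) / e) (Set.Ioo a b) := h
  have hint : IntervalIntegrable f volume a b := by
    rw [intervalIntegrable_iff_integrableOn_Ioo_of_le hab.le]
    exact ((hg.integrableOn_Icc).mono_set Set.Ioo_subset_Icc_self).congr_fun heq.symm
      measurableSet_Ioo
  refine ⟨hint, ?_⟩
  rw [intervalIntegral.integral_of_le hab.le, integral_Ioc_eq_integral_Ioo,
    setIntegral_congr_fun measurableSet_Ioo heq, ← integral_Ioc_eq_integral_Ioo,
    ← intervalIntegral.integral_of_le hab.le]
  have hrw : (fun t : ℝ => (c + t * d) / e) = fun t : ℝ => c / e + t * (d / e) := by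
    funext t; ring
  have hc : Continuous fun t : ℝ => t * (d / e) := by fun_prop
  rw [hrw, intervalIntegral.integral_add (intervalIntegrable_const)
    (hc.intervalIntegrable a b),
    intervalIntegral.integral_const, intervalIntegral.integral_mul_const, integral_id]
  simp only [smul_eq_mul]
  ring

set_option maxHeartbeats 1000000 in
theorem abjm_density_normalized
    (Δ₁ Δ₂ Δ₃ Δ₄ μ : ℝ) (ρ : ℝ → ℝ)
    (h1 : 0 < Δ₁) (h12 : Δ₁ < Δ₂) (h3 : 0 < Δ₃) (h34 : Δ₃ < Δ₄)
    (hsum : Δ₁ + Δ₂ + Δ₃ + Δ₄ = 2 * π)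
    (hμ : μ = Real.sqrt (2 * (Δ₁ * Δ₂ * Δ₃ * Δ₄)))
    (hleft : ∀ t ∈ Set.Ioo (-μ / Δ₃) (-μ / Δ₄),
      ρ t = (μ + t * Δ₃) / ((Δ₁ + Δ₃) * (Δ₂ + Δ₃) * (Δ₄ - Δ₃)))
    (hcenter : ∀ t ∈ Set.Ioo (-μ / Δ₄) (μ / Δ₂),
      ρ t = (2 * π * μ + t * (Δ₃ * Δ₄ - Δ₁ * Δ₂)) /
        ((Δ₁ + Δ₃) * (Δ₂ + Δ₃) * (Δ₁ + Δ₄) * (Δ₂ + Δ₄)))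
    (hright : ∀ t ∈ Set.Ioo (μ / Δ₂) (μ / Δ₁),
      ρ t = (μ - t * Δ₁) / ((Δ₁ + Δ₃) * (Δ₁ + Δ₄) * (Δ₂ - Δ₁))) :
    (∀ t, t ∈ Set.Ioo (-μ / Δ₃) (-μ / Δ₄) ∪ Set.Ioo (-μ / Δ₄) (μ / Δ₂) ∪
        Set.Ioo (μ / Δ₂) (μ / Δ₁) → 0 ≤ ρ t) ∧
    ∫ t in (-μ / Δ₃)..(μ / Δ₁), ρ t = 1 := by
  have h2 : 0 < Δ₂ := h1.trans h12
  have h4 : 0 < Δ₄ := h3.trans h34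
  have hprod : (0:ℝ) < 2 * (Δ₁ * Δ₂ * Δ₃ * Δ₄) := by positivity
  have hμpos : 0 < μ := by rw [hμ]; exact Real.sqrt_pos.mpr hprod
  have hμ2 : μ ^ 2 = 2 * (Δ₁ * Δ₂ * Δ₃ * Δ₄) := by
    rw [hμ]; exact Real.sq_sqrt hprod.le
  have hπ : π = (Δ₁ + Δ₂ + Δ₃ + Δ₄) / 2 := by linarith
  have hπpos : 0 < π := by positivity
  -- ordering of the four endpoints
  have hab1 : -μ / Δ₃ < -μ / Δ₄ := by
    rw [neg_div, neg_div, neg_lt_neg_iff]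
    exact div_lt_div_of_pos_left hμpos h3 h34
  have hab2 : -μ / Δ₄ < μ / Δ₂ := by
    have : (0:ℝ) < μ / Δ₂ := by positivity
    have : -μ / Δ₄ < 0 := by rw [neg_div]; simp [div_pos hμpos h4]
    linarith [div_pos hμpos h2]
  have hab3 : μ / Δ₂ < μ / Δ₁ := div_lt_div_of_pos_left hμpos h1 h12
  -- nonnegativity
  have hnn : ∀ t, t ∈ Set.Ioo (-μ / Δ₃) (-μ / Δ₄) ∪ Set.Ioo (-μ / Δ₄) (μ / Δ₂) ∪
      Set.Ioo (μ / Δ₂) (μ / Δ₁) → 0 ≤ ρ t := by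
    intro t ht
    rcases ht with (ht | ht) | ht
    · rw [hleft t ht]
      have h1' : -μ < t * Δ₃ := (div_lt_iff₀ h3).mp ht.1
      have hden : (0:ℝ) < (Δ₁ + Δ₃) * (Δ₂ + Δ₃) * (Δ₄ - Δ₃) := by
        apply mul_pos (by positivity); linarith
      exact div_nonneg (by linarith) hden.le
    · rw [hcenter t ht]
      have h1' : -μ < t * Δ₄ := (div_lt_iff₀ h4).mp ht.1
      have h2' : t * Δ₂ < μ := (lt_div_iff₀ h2).mp ht.2
      have hnum : 0 ≤ 2 * π * μ + t * (Δ₃ * Δ₄ - Δ₁ * Δ₂) := by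
        have hkey : 0 ≤ Δ₂ * Δ₄ * (2 * π * μ + t * (Δ₃ * Δ₄ - Δ₁ * Δ₂)) := by
          rcases le_or_gt 0 (Δ₃ * Δ₄ - Δ₁ * Δ₂) with hd | hd
          · nlinarith [mul_le_mul_of_nonneg_left h1'.le (mul_nonneg h2.le hd),
              mul_nonneg (mul_nonneg hμpos.le h2.le)
                (mul_nonneg (by linarith : (0:ℝ) ≤ 2 * π - Δ₃) h4.le),
              mul_nonneg (mul_nonneg hμpos.le h2.le) (mul_nonneg h1.le h2.le)]
          · nlinarith [mul_le_mul_of_nonneg_left h2'.le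
                (mul_nonneg h4.le (by linarith : (0:ℝ) ≤ Δ₁ * Δ₂ - Δ₃ * Δ₄)),
              mul_nonneg (mul_nonneg hμpos.le h4.le)
                (mul_nonneg (by linarith : (0:ℝ) ≤ 2 * π - Δ₁) h2.le),
              mul_nonneg (mul_nonneg hμpos.le h4.le) (mul_nonneg h3.le h4.le)]
        nlinarith [hkey, mul_pos h2 h4]
      have hden : (0:ℝ) < (Δ₁ + Δ₃) * (Δ₂ + Δ₃) * (Δ₁ + Δ₄) * (Δ₂ + Δ₄) := by positivity
      exact div_nonneg hnum hden.le
    · rw [hright t ht]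
      have h1' : t * Δ₁ < μ := (lt_div_iff₀ h1).mp ht.2
      have hden : (0:ℝ) < (Δ₁ + Δ₃) * (Δ₁ + Δ₄) * (Δ₂ - Δ₁) := by
        apply mul_pos (by positivity); linarith
      exact div_nonneg (by linarith) hden.le
  refine ⟨hnn, ?_⟩
  -- the three pieces
  obtain ⟨hi1, he1⟩ := abjm_piece (-μ / Δ₃) (-μ / Δ₄) μ Δ₃
    ((Δ₁ + Δ₃) * (Δ₂ + Δ₃) * (Δ₄ - Δ₃)) hab1 ρ hleft
  obtain ⟨hi2, he2⟩ := abjm_piece (-μ / Δ₄) (μ / Δ₂) (2 * π * μ) (Δ₃ * Δ₄ - Δ₁ * Δ₂)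
    ((Δ₁ + Δ₃) * (Δ₂ + Δ₃) * (Δ₁ + Δ₄) * (Δ₂ + Δ₄)) hab2 ρ hcenter
  obtain ⟨hi3, he3⟩ := abjm_piece (μ / Δ₂) (μ / Δ₁) μ (-Δ₁)
    ((Δ₁ + Δ₃) * (Δ₁ + Δ₄) * (Δ₂ - Δ₁)) hab3 ρ
    (fun t ht => by rw [hright t ht]; ring)
  rw [← intervalIntegral.integral_add_adjacent_intervals (hi1.trans hi2) hi3,
    ← intervalIntegral.integral_add_adjacent_intervals hi1 hi2, he1, he2, he3]
  -- rewrite each piece as μ^2 times a μ-free factor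
  have hne1 : Δ₁ ≠ 0 := h1.ne'
  have hne2 : Δ₂ ≠ 0 := h2.ne'
  have hne3 : Δ₃ ≠ 0 := h3.ne'
  have hne4 : Δ₄ ≠ 0 := h4.ne'
  have E1 : ((-μ / Δ₄ - -μ / Δ₃) * μ + ((-μ / Δ₄) ^ 2 - (-μ / Δ₃) ^ 2) / 2 * Δ₃) /
      ((Δ₁ + Δ₃) * (Δ₂ + Δ₃) * (Δ₄ - Δ₃))
      = μ ^ 2 * (((1 / Δ₃ - 1 / Δ₄) + (1 / Δ₄ ^ 2 - 1 / Δ₃ ^ 2) / 2 * Δ₃) /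
        ((Δ₁ + Δ₃) * (Δ₂ + Δ₃) * (Δ₄ - Δ₃))) := by
    field_simp
    ring
  have E2 : ((μ / Δ₂ - -μ / Δ₄) * (2 * π * μ) + ((μ / Δ₂) ^ 2 - (-μ / Δ₄) ^ 2) / 2 *
        (Δ₃ * Δ₄ - Δ₁ * Δ₂)) / ((Δ₁ + Δ₃) * (Δ₂ + Δ₃) * (Δ₁ + Δ₄) * (Δ₂ + Δ₄))
      = μ ^ 2 * (((1 / Δ₂ + 1 / Δ₄) * (2 * π) + (1 / Δ₂ ^ 2 - 1 / Δ₄ ^ 2) / 2 *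
        (Δ₃ * Δ₄ - Δ₁ * Δ₂)) / ((Δ₁ + Δ₃) * (Δ₂ + Δ₃) * (Δ₁ + Δ₄) * (Δ₂ + Δ₄))) := by
    field_simp
    ring
  have E3 : ((μ / Δ₁ - μ / Δ₂) * μ + ((μ / Δ₁) ^ 2 - (μ / Δ₂) ^ 2) / 2 * (-Δ₁)) /
      ((Δ₁ + Δ₃) * (Δ₁ + Δ₄) * (Δ₂ - Δ₁))
      = μ ^ 2 * (((1 / Δ₁ - 1 / Δ₂) + (1 / Δ₁ ^ 2 - 1 / Δ₂ ^ 2) / 2 * (-Δ₁)) /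
        ((Δ₁ + Δ₃) * (Δ₁ + Δ₄) * (Δ₂ - Δ₁))) := by
    field_simp
  rw [E1, E2, E3, hμ2, hπ]
  have hd1 : (Δ₁ + Δ₃) ≠ 0 := by positivity
  have hd2 : (Δ₂ + Δ₃) ≠ 0 := by positivity
  have hd3 : (Δ₁ + Δ₄) ≠ 0 := by positivity
  have hd4 : (Δ₂ + Δ₄) ≠ 0 := by positivity
  have hd5 : (Δ₄ - Δ₃) ≠ 0 := by linarith
  have hd6 : (Δ₂ - Δ₁) ≠ 0 := by linarith
  field_simp
  ring
end
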